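/- Let P(x) = [x; ‖x‖²; ‖x‖⁴; …; ‖x‖^{2^m}] and Q(q) = [q; 1/2; …; 1/2] with m appended entries. If ‖q‖ = 1, then ‖Q(q) - P(x)‖² = 1 + m/4 - 2⟨q,x⟩ + ‖x‖^{2^{m+1}}. -/

import Mathlib

open Real RealInnerProductSpace

/-- L2-ALSH preprocessing transformation: append to `x` the `m` scalars
`‖x‖^(2^i)`, `i = 1, …, m`. -/
noncomputable def l2ALSH_P (m D : ℕ) (x : EuclideanSpace ℝ (Fin D)) :
    EuclideanSpace ℝ (Fin (D + m)) :=
  WithLp.toLp 2 fun j => if h : (j : ℕ) < D then x ⟨j, h⟩ else ‖x‖ ^ (2 ^ ((j : ℕ) - D + 1))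

/-- L2-ALSH query transformation: append `m` copies of `1/2`. -/
noncomputable def l2ALSH_Q (m D : ℕ) (q : EuclideanSpace ℝ (Fin D)) :
    EuclideanSpace ℝ (Fin (D + m)) :=
  WithLp.toLp 2 fun j => if h : (j : ℕ) < D then q ⟨j, h⟩ else 1 / 2

/-- Each term is `1/4 - t^(2^(i+1)) + t^(2^(i+2))`, so the sum telescopes. -/
theorem sum_range_sq_half_sub_pow_two_pow {K : Type*} [Field K] [CharZero K] (t : K) (m : ℕ) :
    ∑ i ∈ Finset.range m, (1 / 2 - t ^ 2 ^ (i + 1)) ^ 2 = m / 4 - t ^ 2 + t ^ 2 ^ (m + 1) := by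
  induction m with
  | zero => simp
  | succ m ih =>
    have hsq : (t ^ 2 ^ (m + 1)) ^ 2 = t ^ 2 ^ (m + 2) := by rw [← pow_mul, ← pow_succ]
    rw [Finset.sum_range_succ, ih]
    push_cast
    linear_combination hsq

section Coordinates

variable (m D : ℕ) (x q : EuclideanSpace ℝ (Fin D))

@[simp]
theorem l2ALSH_P_castAdd (i : Fin D) : l2ALSH_P m D x (Fin.castAdd m i) = x i := by
  simp [l2ALSH_P]

@[simp]
theorem l2ALSH_P_natAdd (i : Fin m) :
    l2ALSH_P m D x (Fin.natAdd D i) = ‖x‖ ^ 2 ^ ((i : ℕ) + 1) := by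
  simp [l2ALSH_P]

@[simp]
theorem l2ALSH_Q_castAdd (i : Fin D) : l2ALSH_Q m D q (Fin.castAdd m i) = q i := by
  simp [l2ALSH_Q]

@[simp]
theorem l2ALSH_Q_natAdd (i : Fin m) : l2ALSH_Q m D q (Fin.natAdd D i) = 1 / 2 := by
  simp [l2ALSH_Q]

end Coordinates

theorem l2ALSH_key_identity_general (m D : ℕ)
    (q x : EuclideanSpace ℝ (Fin D)) (hq : ‖q‖ = 1) :
    ‖l2ALSH_Q m D q - l2ALSH_P m D x‖ ^ 2
      = 1 + m / 4 - 2 * ⟪q, x⟫ + ‖x‖ ^ (2 ^ (m + 1)) := by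
  have head : ∑ i : Fin D, (q i - x i) ^ 2 = 1 - 2 * ⟪q, x⟫ + ‖x‖ ^ 2 :=
    calc ∑ i : Fin D, (q i - x i) ^ 2 = ‖q - x‖ ^ 2 := by simp [EuclideanSpace.real_norm_sq_eq]
      _ = 1 - 2 * ⟪q, x⟫ + ‖x‖ ^ 2 := by rw [norm_sub_sq_real, hq, one_pow]
  have tail : ∑ i : Fin m, (1 / 2 - ‖x‖ ^ 2 ^ ((i : ℕ) + 1)) ^ 2
      = m / 4 - ‖x‖ ^ 2 + ‖x‖ ^ 2 ^ (m + 1) := by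
    rw [Fin.sum_univ_eq_sum_range (fun i => (1 / 2 - ‖x‖ ^ 2 ^ (i + 1)) ^ 2),
      sum_range_sq_half_sub_pow_two_pow]
  rw [EuclideanSpace.real_norm_sq_eq, Fin.sum_univ_add]
  simp only [PiLp.sub_apply, l2ALSH_P_castAdd, l2ALSH_Q_castAdd, l2ALSH_P_natAdd,
    l2ALSH_Q_natAdd, head, tail]
  ring

/-- Key identity of L2-ALSH: if `‖q‖ = 1` then
`‖Q(q) - P(x)‖² = 1 + m/4 - 2⟨q,x⟩ + ‖x‖^(2^(m+1))`. -/
theorem l2ALSH_key_identity (m D : ℕ) (hm : 1 ≤ m)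
    (q x : EuclideanSpace ℝ (Fin D)) (hq : ‖q‖ = 1) :
    ‖l2ALSH_Q m D q - l2ALSH_P m D x‖ ^ 2
      = 1 + m / 4 - 2 * ⟪q, x⟫ + ‖x‖ ^ (2 ^ (m + 1)) :=
  l2ALSH_key_identity_general m D q x hq
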